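/- For a uniform prior over the B standard basis vectors of ℝ^B observed through an AWGN channel with noise variance σ² per component, the MMSE satisfies mmse(σ) ≤ 2B·exp(−c/σ²) for some constant c > 0 depending only on B (e.g. one may take c = 1/8 with a suitable prefactor). -/

import Mathlib

/-!
If `e_i` was sent, the posterior mean is the softmax `p` of `r / σ²` and its squared error is at
most `2 (1 - p_i) = 2 ∑_{j ≠ i} p_j`. From `p_j ≤ 1` and `p_j ≤ p_j / p_i` we get
`p_j ≤ √(p_j / p_i) = exp ((r_j - r_i) / (2σ²)) = exp (-1/(2σ²)) exp ((z_j - z_i) / (2σ))`.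
The Gaussian moment generating function gives `𝔼 exp ((z_j - z_i) / (2σ)) = exp (1/(4σ²))`, so
each of the `B - 1` competitors contributes at most `2 exp (-1/(4σ²))`.
-/

open MeasureTheory

/-- Standard Gaussian density on `ℝ^B`. -/
noncomputable def gpdfB (B : ℕ) (z : Fin B → ℝ) : ℝ :=
  ∏ j, Real.exp (-(z j)^2 / 2) / Real.sqrt (2 * Real.pi)

/-- The `i`-th standard basis vector of `ℝ^B`. -/
def basisVec (B : ℕ) (i : Fin B) : Fin B → ℝ := fun k => if k = i then 1 else 0

/-- Posterior mean (denoiser) for the uniform prior over standard basis vectors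
under AWGN with variance `σ²` per component. -/
noncomputable def denoiseB (B : ℕ) (σ : ℝ) (r : Fin B → ℝ) (k : Fin B) : ℝ :=
  Real.exp (r k / σ^2) / ∑ j, Real.exp (r j / σ^2)

/-- MMSE for a uniform prior over the `B` standard basis vectors observed through AWGN
with per-component noise variance `σ²`. -/
noncomputable def mmseB (B : ℕ) (σ : ℝ) : ℝ :=
  (1 / (B:ℝ)) * ∑ i : Fin B, ∫ z : Fin B → ℝ, gpdfB B z *
    ∑ k, (denoiseB B σ (fun j => basisVec B i j + σ * z j) k - basisVec B i k)^2

open ProbabilityTheory Finset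

lemma gaussianPDFReal_zero_one (x : ℝ) :
    gaussianPDFReal 0 1 x = Real.exp (-x ^ 2 / 2) / Real.sqrt (2 * Real.pi) := by
  simp [gaussianPDFReal, div_eq_inv_mul]

lemma integral_gaussianPDF_mul_exp (t : ℝ) :
    ∫ x, Real.exp (-x ^ 2 / 2) / Real.sqrt (2 * Real.pi) * Real.exp (t * x) =
      Real.exp (t ^ 2 / 2) := by
  have h := congrFun (mgf_id_gaussianReal (μ := 0) (v := 1)) t
  rw [mgf, integral_gaussianReal_eq_integral_smul one_ne_zero] at h
  simpa [gaussianPDFReal_zero_one] using h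

lemma integrable_gaussianPDF_mul_exp (t : ℝ) :
    Integrable (fun x ↦ Real.exp (-x ^ 2 / 2) / Real.sqrt (2 * Real.pi) * Real.exp (t * x)) := by
  have h := integrable_exp_mul_gaussianReal (μ := 0) (v := 1) t
  rw [gaussianReal_of_var_ne_zero _ one_ne_zero,
    integrable_withDensity_iff_integrable_smul' (measurable_gaussianPDF 0 1)
      (ae_of_all _ fun _ ↦ gaussianPDF_lt_top)] at h
  simpa [toReal_gaussianPDF, gaussianPDFReal_zero_one] using h

lemma sum_single_sub_single_mul {ι : Type*} [Fintype ι] [DecidableEq ι] (i j : ι) (c : ℝ)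
    (z : ι → ℝ) : ∑ k, (Pi.single j c - Pi.single i c : ι → ℝ) k * z k = c * (z j - z i) := by
  simp [Pi.single_apply, ite_mul, sub_mul, sum_sub_distrib, mul_sub]

section GaussianVector

variable {B : ℕ}

lemma gpdfB_nonneg (z : Fin B → ℝ) : 0 ≤ gpdfB B z :=
  prod_nonneg fun _ _ ↦ by positivity

lemma gpdfB_mul_exp_sum (t z : Fin B → ℝ) :
    gpdfB B z * Real.exp (∑ k, t k * z k) =
      ∏ k, Real.exp (-z k ^ 2 / 2) / Real.sqrt (2 * Real.pi) * Real.exp (t k * z k) := by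
  rw [Real.exp_sum, gpdfB, ← prod_mul_distrib]

lemma integral_gpdfB_mul_exp_sum (t : Fin B → ℝ) :
    ∫ z, gpdfB B z * Real.exp (∑ k, t k * z k) = Real.exp (∑ k, t k ^ 2 / 2) := by
  simp_rw [gpdfB_mul_exp_sum]
  rw [integral_fintype_prod_volume_eq_prod
    (fun k x ↦ Real.exp (-x ^ 2 / 2) / Real.sqrt (2 * Real.pi) * Real.exp (t k * x))]
  simp_rw [integral_gaussianPDF_mul_exp, Real.exp_sum]

lemma integrable_gpdfB_mul_exp_sum (t : Fin B → ℝ) :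
    Integrable fun z ↦ gpdfB B z * Real.exp (∑ k, t k * z k) := by
  simp_rw [gpdfB_mul_exp_sum]
  exact Integrable.fintype_prod fun k ↦ integrable_gaussianPDF_mul_exp (t k)

lemma integral_gpdfB_mul_exp_sub {i j : Fin B} (hij : i ≠ j) (c : ℝ) :
    ∫ z, gpdfB B z * Real.exp (c * (z j - z i)) = Real.exp (c ^ 2) := by
  simp_rw [← sum_single_sub_single_mul, integral_gpdfB_mul_exp_sum]
  rw [Fintype.sum_eq_add j i hij.symm fun k hk ↦ by simp [hk.1, hk.2]]
  simp [hij, hij.symm]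

lemma integrable_gpdfB_mul_exp_sub (i j : Fin B) (c : ℝ) :
    Integrable fun z ↦ gpdfB B z * Real.exp (c * (z j - z i)) := by
  simp_rw [← sum_single_sub_single_mul]
  exact integrable_gpdfB_mul_exp_sum _

end GaussianVector

section Softmax

variable {ι : Type*} [Fintype ι]

noncomputable def softmax (r : ι → ℝ) (k : ι) : ℝ :=
  Real.exp (r k) / ∑ j, Real.exp (r j)

lemma softmax_nonneg (r : ι → ℝ) (k : ι) : 0 ≤ softmax r k := by
  unfold softmax; positivity

lemma sum_softmax [Nonempty ι] (r : ι → ℝ) : ∑ k, softmax r k = 1 := by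
  simp_rw [softmax, ← sum_div]
  exact div_self (sum_pos (fun _ _ ↦ Real.exp_pos _) univ_nonempty).ne'

lemma softmax_le_exp_half_sub (r : ι → ℝ) (i j : ι) :
    softmax r j ≤ Real.exp ((r j - r i) / 2) := by
  have hpos : 0 < ∑ k, Real.exp (r k) := sum_pos (fun _ _ ↦ Real.exp_pos _) ⟨i, mem_univ i⟩
  have hle : ∀ k, Real.exp (r k) ≤ ∑ k, Real.exp (r k) := fun k ↦
    single_le_sum (fun _ _ ↦ (Real.exp_pos _).le) (mem_univ k)
  have hle_one : softmax r j ≤ 1 := (div_le_one hpos).mpr (hle j)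
  have hle_ratio : softmax r j ≤ Real.exp (r j) / Real.exp (r i) :=
    div_le_div_of_nonneg_left (Real.exp_pos _).le (Real.exp_pos _) (hle i)
  have hsq : softmax r j ^ 2 ≤ Real.exp ((r j - r i) / 2) ^ 2 :=
    calc softmax r j ^ 2 = softmax r j * softmax r j := sq _
      _ ≤ 1 * (Real.exp (r j) / Real.exp (r i)) :=
          mul_le_mul hle_one hle_ratio (softmax_nonneg r j) zero_le_one
      _ = Real.exp ((r j - r i) / 2) ^ 2 := by
          rw [one_mul, ← Real.exp_sub, ← Real.exp_nat_mul]; ring_nf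
  exact (pow_le_pow_iff_left₀ (softmax_nonneg r j) (Real.exp_pos _).le two_ne_zero).mp hsq

end Softmax

lemma sum_sq_sub_indicator_le {ι : Type*} [Fintype ι] [DecidableEq ι] {p : ι → ℝ}
    (hp : ∀ k, 0 ≤ p k) (hsum : ∑ k, p k = 1) (i : ι) :
    ∑ k, (p k - if k = i then 1 else 0) ^ 2 ≤ 2 * ∑ j ∈ univ.erase i, p j := by
  have hle : ∀ k, p k ≤ 1 := fun k ↦ hsum ▸ single_le_sum (fun k _ ↦ hp k) (mem_univ k)
  have hrest : ∑ j ∈ univ.erase i, p j = 1 - p i := by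
    rw [← hsum, ← add_sum_erase _ _ (mem_univ i), add_sub_cancel_left]
  rw [← add_sum_erase _ _ (mem_univ i), if_pos rfl,
    sum_congr rfl fun j hj ↦ by rw [if_neg (ne_of_mem_erase hj), sub_zero]]
  have hsq : ∑ j ∈ univ.erase i, p j ^ 2 ≤ ∑ j ∈ univ.erase i, p j :=
    sum_le_sum fun j _ ↦ by nlinarith [hp j, hle j]
  nlinarith [hp i, hle i]

section Denoiser

variable {B : ℕ} {σ : ℝ}

lemma sum_sq_denoiseB_sub_le (hσ : σ ≠ 0) (i : Fin B) (z : Fin B → ℝ) :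
    ∑ k, (denoiseB B σ (fun j => basisVec B i j + σ * z j) k - basisVec B i k) ^ 2 ≤
      2 * ∑ j ∈ univ.erase i,
        Real.exp (-(1 / (2 * σ ^ 2))) * Real.exp (1 / (2 * σ) * (z j - z i)) := by
  have : Nonempty (Fin B) := ⟨i⟩
  refine (sum_sq_sub_indicator_le (softmax_nonneg _) (sum_softmax _) i).trans ?_
  gcongr with j hj
  refine (softmax_le_exp_half_sub _ i j).trans_eq ?_
  rw [← Real.exp_add]
  congr 1
  simp only [basisVec, if_neg (ne_of_mem_erase hj), if_true]
  field_simp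
  ring

lemma integral_gpdfB_mul_sum_sq_denoiseB_sub_le (hσ : σ ≠ 0) (i : Fin B) :
    ∫ z, gpdfB B z *
        ∑ k, (denoiseB B σ (fun j => basisVec B i j + σ * z j) k - basisVec B i k) ^ 2 ≤
      2 * B * Real.exp (-(1 / 4) / σ ^ 2) := by
  set c := 1 / (2 * σ) with hc
  have hint : ∀ j ∈ univ.erase i, Integrable fun z ↦
      Real.exp (-(1 / (2 * σ ^ 2))) * (gpdfB B z * Real.exp (c * (z j - z i))) :=
    fun j _ ↦ (integrable_gpdfB_mul_exp_sub i j c).const_mul _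
  have hpointwise : ∀ z, gpdfB B z *
      ∑ k, (denoiseB B σ (fun j => basisVec B i j + σ * z j) k - basisVec B i k) ^ 2 ≤
      2 * ∑ j ∈ univ.erase i,
        Real.exp (-(1 / (2 * σ ^ 2))) * (gpdfB B z * Real.exp (c * (z j - z i))) := by
    intro z
    calc _ ≤ gpdfB B z * (2 * ∑ j ∈ univ.erase i,
            Real.exp (-(1 / (2 * σ ^ 2))) * Real.exp (c * (z j - z i))) :=
          mul_le_mul_of_nonneg_left (sum_sq_denoiseB_sub_le hσ i z) (gpdfB_nonneg z)
      _ = _ := by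
          rw [mul_left_comm, mul_sum]
          simp only [mul_left_comm (gpdfB B z)]
  calc _ ≤ ∫ z, 2 * ∑ j ∈ univ.erase i,
          Real.exp (-(1 / (2 * σ ^ 2))) * (gpdfB B z * Real.exp (c * (z j - z i))) :=
        integral_mono_of_nonneg
          (ae_of_all _ fun z ↦ mul_nonneg (gpdfB_nonneg z) (sum_nonneg fun _ _ ↦ sq_nonneg _))
          ((integrable_finsetSum _ hint).const_mul 2) (ae_of_all _ hpointwise)
    _ = 2 * #(univ.erase i) * Real.exp (-(1 / 4) / σ ^ 2) := by
        rw [integral_const_mul, integral_finsetSum _ hint, mul_assoc, ← nsmul_eq_mul,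
          ← sum_const]
        congr 1
        refine sum_congr rfl fun j hj ↦ ?_
        rw [integral_const_mul, integral_gpdfB_mul_exp_sub (ne_of_mem_erase hj).symm,
          ← Real.exp_add, hc]
        congr 1
        field_simp
        ring
    _ ≤ 2 * B * Real.exp (-(1 / 4) / σ ^ 2) := by
        gcongr
        exact_mod_cast (card_erase_le).trans_eq (card_fin B)

end Denoiser

theorem stmt_14_general (B : ℕ) :
    ∃ c : ℝ, 0 < c ∧ ∀ σ : ℝ, 0 < σ → mmseB B σ ≤ 2 * (B:ℝ) * Real.exp (-c / σ^2) := by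
  refine ⟨1 / 4, by norm_num, fun σ hσ ↦ ?_⟩
  calc mmseB B σ ≤ 1 / B * ∑ _i : Fin B, 2 * B * Real.exp (-(1 / 4) / σ ^ 2) := by
        unfold mmseB
        gcongr with i
        exact integral_gpdfB_mul_sum_sq_denoiseB_sub_le hσ.ne' i
    _ = 2 * B * Real.exp (-(1 / 4) / σ ^ 2) := by
        rcases eq_or_ne (B : ℝ) 0 with hB | hB
        · simp [hB]
        · rw [sum_const, card_univ, Fintype.card_fin, nsmul_eq_mul]
          field_simp

/-- The MMSE decays exponentially as `σ → 0`:
`mmse(σ) ≤ 2B exp(−c/σ²)` for some constant `c > 0` depending only on `B`. -/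
theorem stmt_14 (B : ℕ) (hB : 2 ≤ B) :
    ∃ c : ℝ, 0 < c ∧ ∀ σ : ℝ, 0 < σ → mmseB B σ ≤ 2 * (B:ℝ) * Real.exp (-c / σ^2) :=
  stmt_14_general B
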